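/- Let F be an R-subalgebra of g(S) such that every element of g(S) can be written uniquely in the form Σ_{i=0}^{m-1} z^i y_i with y_0, …, y_{m-1} ∈ F. Then there exists a 1-cocycle u on Γ in Aut_S(g(S)) with F = g(S)_u; explicitly, if for each ī ∈ Γ one lets w_ī be the unique R-linear, ι_i-semilinear automorphism of g(S) fixing F pointwise, then u_ī := w_ī ∘ (id ⊗ ι_i)⁻¹ is such a 1-cocycle. -/

import Mathlib

open scoped TensorProduct
open LaurentPolynomial

set_option maxHeartbeats 1000000
set_option synthInstance.maxHeartbeats 400000

noncomputable section

namespace LoopPaper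

variable {k : Type*} [Field k] {g : Type*} [LieRing g] [LieAlgebra k g]

/-- A linear automorphism of a Lie algebra is a Lie algebra automorphism if it
preserves brackets. -/
def IsLieAut (σ : g ≃ₗ[k] g) : Prop := ∀ x y : g, σ ⁅x, y⁆ = ⁅σ x, σ y⁆

theorem IsLieAut.one : IsLieAut (1 : g ≃ₗ[k] g) := fun _ _ => rfl

theorem IsLieAut.mul {σ τ : g ≃ₗ[k] g} (hσ : IsLieAut σ) (hτ : IsLieAut τ) :
    IsLieAut (σ * τ) := fun x y => by
  show σ (τ ⁅x, y⁆) = ⁅σ (τ x), σ (τ y)⁆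
  rw [hτ, hσ]

theorem IsLieAut.inv {σ : g ≃ₗ[k] g} (hσ : IsLieAut σ) : IsLieAut σ⁻¹ := fun x y => by
  apply σ.injective
  have h1 : ∀ z, σ (σ⁻¹ z) = z := fun z => σ.apply_symm_apply z
  rw [h1, hσ, h1, h1]

/-! ### The variable-scaling automorphism `z ↦ c z` of `k[z,z⁻¹]` -/

/-- The unit `c^n • z^n` of the Laurent polynomial ring. -/
def scaleUnit (c : kˣ) (n : ℤ) : (LaurentPolynomial k)ˣ where
  val := ((c ^ n : kˣ) : k) • T n
  inv := ((c ^ (-n) : kˣ) : k) • T (-n)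
  val_inv := by
    rw [smul_mul_smul_comm, ← T_add, ← Units.val_mul, ← zpow_add, add_neg_cancel, zpow_zero,
      Units.val_one, T_zero, one_smul]
  inv_val := by
    rw [smul_mul_smul_comm, ← T_add, ← Units.val_mul, ← zpow_add, neg_add_cancel, zpow_zero,
      Units.val_one, T_zero, one_smul]

/-- The homomorphism `n ↦ c^n • z^n` from `ℤ` to the units of `k[z,z⁻¹]`. -/
def scaleUnitHom (c : kˣ) : Multiplicative ℤ →* (LaurentPolynomial k)ˣ where
  toFun n := scaleUnit c n.toAdd
  map_one' := Units.ext (by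
    show ((c ^ (0 : ℤ) : kˣ) : k) • T (0 : ℤ) = 1
    rw [zpow_zero, Units.val_one, T_zero, one_smul])
  map_mul' a b := Units.ext (by
    show ((c ^ (a.toAdd + b.toAdd) : kˣ) : k) • T (a.toAdd + b.toAdd) =
      (((c ^ a.toAdd : kˣ) : k) • T a.toAdd) * (((c ^ b.toAdd : kˣ) : k) • T b.toAdd)
    rw [smul_mul_smul_comm, ← T_add, ← Units.val_mul, ← zpow_add])

/-- The `k`-algebra endomorphism of `k[z,z⁻¹]` with `z ↦ c z`. -/
def scaleVar (c : kˣ) : LaurentPolynomial k →ₐ[k] LaurentPolynomial k :=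
  AddMonoidAlgebra.lift k _ ℤ ((Units.coeHom _).comp (scaleUnitHom c))

theorem scaleVar_T (c : kˣ) (n : ℤ) : scaleVar c (T n) = ((c ^ n : kˣ) : k) • T n := by
  have h : (T n : LaurentPolynomial k) = AddMonoidAlgebra.of k ℤ (Multiplicative.ofAdd n) := rfl
  rw [h, scaleVar, AddMonoidAlgebra.lift_of]
  rfl

theorem scaleVar_comp (c d : kˣ) :
    (scaleVar c).comp (scaleVar d) = scaleVar (k := k) (c * d) := by
  apply AddMonoidAlgebra.algHom_ext
  intro n
  have hT : (AddMonoidAlgebra.single n 1 : LaurentPolynomial k) = T n := rfl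
  simp only [AlgHom.coe_comp, Function.comp_apply, hT]
  rw [scaleVar_T, map_smul, scaleVar_T, smul_smul, scaleVar_T]
  congr 1
  rw [mul_zpow, Units.val_mul, mul_comm]
  exact Subsingleton.elim _ _

theorem scaleVar_id : scaleVar (1 : kˣ) = AlgHom.id k (LaurentPolynomial k) := by
  apply AddMonoidAlgebra.algHom_ext
  intro n
  have hT : (AddMonoidAlgebra.single n 1 : LaurentPolynomial k) = T n := rfl
  simp only [hT, AlgHom.coe_id, id_eq]
  rw [scaleVar_T, one_zpow, Units.val_one, one_smul]
  exact Subsingleton.elim _ _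

/-- The `k`-algebra automorphism of `k[z,z⁻¹]` with `z ↦ c z`. -/
def scaleVarEquiv (c : kˣ) : LaurentPolynomial k ≃ₐ[k] LaurentPolynomial k :=
  AlgEquiv.ofAlgHom (scaleVar c) (scaleVar c⁻¹)
    (by rw [scaleVar_comp, mul_inv_cancel, scaleVar_id])
    (by rw [scaleVar_comp, inv_mul_cancel, scaleVar_id])

theorem scaleVarEquiv_apply (c : kˣ) (p : LaurentPolynomial k) :
    scaleVarEquiv c p = scaleVar c p := rfl


/-- `R = k[t,t⁻¹]`, identified with the `k`-subalgebra of `S = k[z,z⁻¹]` generated by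
`t = z^m` and `t⁻¹ = z^{-m}`. -/
def Rsub (k : Type*) [Field k] (m : ℕ) : Subalgebra k (LaurentPolynomial k) :=
  Algebra.adjoin k {T (m : ℤ), T (-(m : ℤ))}

/-- `g(S) = g ⊗_k S` is a Lie algebra over `k` (by restriction from `S`). -/
instance instLieAlgebraTensorBase : LieAlgebra k (LaurentPolynomial k ⊗[k] g) where
  lie_smul c x y := by
    have h := lie_smul (algebraMap k (LaurentPolynomial k) c) x y
    rwa [algebraMap_smul, algebraMap_smul] at h

/-- The underlying submodule `⊕_{i ∈ ℤ} g_ī ⊗ z^i` of the loop algebra. -/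
def loopCarrier (ζ : k) (σ : g ≃ₗ[k] g) : Submodule k (LaurentPolynomial k ⊗[k] g) :=
  Submodule.span k {p | ∃ (i : ℤ) (x : g), σ x = ζ ^ i • x ∧ p = T i ⊗ₜ[k] x}

theorem loop_lie_mem {ζ : k} (hζ0 : ζ ≠ 0) {σ : g ≃ₗ[k] g} (hbr : IsLieAut σ)
    {x y : LaurentPolynomial k ⊗[k] g} (hx : x ∈ loopCarrier ζ σ) (hy : y ∈ loopCarrier ζ σ) :
    ⁅x, y⁆ ∈ loopCarrier ζ σ := by
  have key : ∀ p ∈ {p : LaurentPolynomial k ⊗[k] g |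
      ∃ (i : ℤ) (x : g), σ x = ζ ^ i • x ∧ p = T i ⊗ₜ[k] x},
      ∀ q, q ∈ loopCarrier ζ σ → ⁅p, q⁆ ∈ loopCarrier ζ σ := by
    rintro p ⟨i, a, ha, rfl⟩ q hq
    unfold loopCarrier at hq ⊢
    induction hq using Submodule.span_induction with
    | mem q hq =>
      obtain ⟨j, b, hb, rfl⟩ := hq
      rw [LieAlgebra.ExtendScalars.bracket_tmul, ← T_add]
      refine Submodule.subset_span ⟨i + j, ⁅a, b⁆, ?_, rfl⟩
      rw [hbr, ha, hb, smul_lie, lie_smul, smul_smul, ← zpow_add₀ hζ0]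
    | zero =>
      have h0 : ⁅(T i ⊗ₜ[k] a : LaurentPolynomial k ⊗[k] g), (0 : LaurentPolynomial k ⊗[k] g)⁆ = 0 :=
        lie_zero (T i ⊗ₜ[k] a : LaurentPolynomial k ⊗[k] g)
      rw [h0]; exact zero_mem _
    | add q r _ _ hq hr =>
      have h0 : ⁅(T i ⊗ₜ[k] a : LaurentPolynomial k ⊗[k] g), q + r⁆ = ⁅T i ⊗ₜ[k] a, q⁆ + ⁅T i ⊗ₜ[k] a, r⁆ :=
        lie_add (T i ⊗ₜ[k] a : LaurentPolynomial k ⊗[k] g) q r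
      rw [h0]; exact add_mem hq hr
    | smul c q _ hq =>
      have h0 : ⁅(T i ⊗ₜ[k] a : LaurentPolynomial k ⊗[k] g), c • q⁆ = c • ⁅T i ⊗ₜ[k] a, q⁆ :=
        lie_smul c (T i ⊗ₜ[k] a : LaurentPolynomial k ⊗[k] g) q
      rw [h0]; exact Submodule.smul_mem _ _ hq
  unfold loopCarrier at hx
  induction hx using Submodule.span_induction with
  | mem p hp => exact key p hp y hy
  | zero =>
    have h0 : ⁅(0 : LaurentPolynomial k ⊗[k] g), y⁆ = 0 := zero_lie y
    rw [h0]; exact zero_mem _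
  | add p r _ _ hp hr =>
    have h0 : ⁅p + r, y⁆ = ⁅p, y⁆ + ⁅r, y⁆ := add_lie p r y
    rw [h0]; exact add_mem hp hr
  | smul c p _ hp =>
    have h0 : ⁅c • p, y⁆ = c • ⁅p, y⁆ := smul_lie c p y
    rw [h0]; exact Submodule.smul_mem _ _ hp

/-- The loop algebra `L(g,σ) = ⊕_{i ∈ ℤ} g_ī ⊗ z^i`, a Lie subalgebra (over `k`)
of `g(S) = g ⊗_k S`.  Here `m` is a period of `σ` and `ζ` is the chosen root of unity. -/
def loopAlgebra (m : ℕ) (ζ : k) (hζ0 : ζ ≠ 0) (hζm : ζ ^ m = 1) (σ : g ≃ₗ[k] g)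
    (hbr : IsLieAut σ) (hσ : σ ^ m = 1) : LieSubalgebra k (LaurentPolynomial k ⊗[k] g) where
  __ := loopCarrier ζ σ
  lie_mem' := fun hx hy => loop_lie_mem hζ0 hbr hx hy

theorem mem_loopAlgebra_iff {m : ℕ} {ζ : k} {hζ0 : ζ ≠ 0} {hζm : ζ ^ m = 1} {σ : g ≃ₗ[k] g}
    {hbr : IsLieAut σ} {hσ : σ ^ m = 1} {x : LaurentPolynomial k ⊗[k] g} :
    x ∈ loopAlgebra m ζ hζ0 hζm σ hbr hσ ↔ x ∈ loopCarrier ζ σ := Iff.rfl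

theorem T_smul_loop {ζ : k} (hζ0 : ζ ≠ 0) {σ : g ≃ₗ[k] g} {j : ℤ} (hj : ζ ^ j = 1)
    {x : LaurentPolynomial k ⊗[k] g} (hx : x ∈ loopCarrier ζ σ) :
    (T j : LaurentPolynomial k) • x ∈ loopCarrier ζ σ := by
  unfold loopCarrier at hx ⊢
  induction hx using Submodule.span_induction with
  | mem p hp =>
    obtain ⟨i, a, ha, rfl⟩ := hp
    rw [TensorProduct.smul_tmul', smul_eq_mul, ← T_add]
    refine Submodule.subset_span ⟨j + i, a, ?_, rfl⟩
    rw [ha, zpow_add₀ hζ0, hj, one_mul]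
  | zero => rw [smul_zero]; exact zero_mem _
  | add p q _ _ hp hq => rw [smul_add]; exact add_mem hp hq
  | smul c p _ hp =>
    rw [smul_comm]
    exact Submodule.smul_mem _ _ hp

theorem Rsub_smul_loop {m : ℕ} {ζ : k} (hζ0 : ζ ≠ 0) (hζm : ζ ^ m = 1) {σ : g ≃ₗ[k] g}
    {r : LaurentPolynomial k} (hr : r ∈ Rsub k m) :
    ∀ x ∈ loopCarrier ζ σ, r • x ∈ loopCarrier (g := g) ζ σ := by
  induction hr using Algebra.adjoin_induction with
  | mem s hs =>
    intro x hx
    rcases hs with rfl | rfl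
    · refine T_smul_loop hζ0 ?_ hx
      rw [zpow_natCast, hζm]
    · refine T_smul_loop hζ0 ?_ hx
      rw [zpow_neg, zpow_natCast, hζm, inv_one]
  | algebraMap c =>
    intro x hx
    rw [algebraMap_smul]
    exact Submodule.smul_mem _ _ hx
  | add r s _ _ hr hs =>
    intro x hx
    rw [add_smul]
    exact add_mem (hr x hx) (hs x hx)
  | mul r s _ _ hr hs =>
    intro x hx
    rw [mul_smul]
    exact hr _ (hs x hx)


/-- The action of `R` on the loop algebra. -/
instance loopSMulR {m : ℕ} {ζ : k} {hζ0 : ζ ≠ 0} {hζm : ζ ^ m = 1} {σ : g ≃ₗ[k] g}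
    {hbr : IsLieAut σ} {hσ : σ ^ m = 1} :
    SMul ↥(Rsub k m) ↥(loopAlgebra m ζ hζ0 hζm σ hbr hσ) where
  smul r x := ⟨(r : LaurentPolynomial k) • (x : LaurentPolynomial k ⊗[k] g),
    Rsub_smul_loop hζ0 hζm r.2 _ x.2⟩

theorem loop_smul_coe {m : ℕ} {ζ : k} {hζ0 : ζ ≠ 0} {hζm : ζ ^ m = 1} {σ : g ≃ₗ[k] g}
    {hbr : IsLieAut σ} {hσ : σ ^ m = 1} (r : ↥(Rsub k m))
    (x : ↥(loopAlgebra m ζ hζ0 hζm σ hbr hσ)) :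
    ((r • x : ↥(loopAlgebra m ζ hζ0 hζm σ hbr hσ)) : LaurentPolynomial k ⊗[k] g)
      = (r : LaurentPolynomial k) • (x : LaurentPolynomial k ⊗[k] g) := rfl

/-- The loop algebra is a module over `R = k[t,t⁻¹] ⊆ k[z,z⁻¹]`. -/
instance loopModuleR {m : ℕ} {ζ : k} {hζ0 : ζ ≠ 0} {hζm : ζ ^ m = 1} {σ : g ≃ₗ[k] g}
    {hbr : IsLieAut σ} {hσ : σ ^ m = 1} :
    Module ↥(Rsub k m) ↥(loopAlgebra m ζ hζ0 hζm σ hbr hσ) where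
  one_smul x := Subtype.ext (by simp [loop_smul_coe])
  mul_smul r s x := Subtype.ext (by simp [loop_smul_coe, mul_smul])
  smul_zero r := Subtype.ext (by simp [loop_smul_coe])
  smul_add r x y := Subtype.ext (by simp [loop_smul_coe, smul_add])
  add_smul r s x := Subtype.ext (by simp [loop_smul_coe, add_smul])
  zero_smul x := Subtype.ext (by simp [loop_smul_coe])


/-- The inclusion of the loop algebra in `g(S)`, as an `R`-linear map. -/
def loopIncl (m : ℕ) (ζ : k) (hζ0 : ζ ≠ 0) (hζm : ζ ^ m = 1) (σ : g ≃ₗ[k] g)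
    (hbr : IsLieAut σ) (hσ : σ ^ m = 1) :
    ↥(loopAlgebra m ζ hζ0 hζm σ hbr hσ) →ₗ[↥(Rsub k m)] (LaurentPolynomial k ⊗[k] g) where
  toFun x := ↑x
  map_add' _ _ := rfl
  map_smul' _ _ := rfl

/-- The eigenspace `{x ∈ g : σ(x) = c x}`. -/
def eigSpace (σ : g ≃ₗ[k] g) (c : k) : Submodule k g where
  carrier := {x | σ x = c • x}
  add_mem' := by
    intro x y hx hy
    show σ (x + y) = c • (x + y)
    rw [map_add, hx, hy, smul_add]
  zero_mem' := by
    show σ 0 = c • (0 : g)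
    rw [map_zero, smul_zero]
  smul_mem' := by
    intro t x hx
    show σ (t • x) = c • t • x
    rw [map_smul, hx, smul_comm]

/-- The `R`-algebra automorphism `id ⊗ ι_i` of `g(S)`, where `ι_i(z) = ζ^i z`. -/
def idTensorIota (ζ : k) (hζ0 : ζ ≠ 0) (i : ℤ) :
    (LaurentPolynomial k ⊗[k] g) ≃ₗ[k] (LaurentPolynomial k ⊗[k] g) :=
  TensorProduct.congr (scaleVarEquiv (Units.mk0 ζ hζ0 ^ i)).toLinearEquiv (LinearEquiv.refl k g)

/-- A `k`-linear automorphism of `g(S)` lies in `Aut_S(g(S))` if it is `S`-linear and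
preserves brackets. -/
def IsSAut (f : (LaurentPolynomial k ⊗[k] g) ≃ₗ[k] (LaurentPolynomial k ⊗[k] g)) : Prop :=
  (∀ (s : LaurentPolynomial k) (x : LaurentPolynomial k ⊗[k] g), f (s • x) = s • f x) ∧
    ∀ x y : LaurentPolynomial k ⊗[k] g, f ⁅x, y⁆ = ⁅f x, f y⁆

/-- The action of `ī ∈ Γ = ℤ/mℤ` on `Aut_S(g(S))`:  `ⁱτ = (id ⊗ ι_i) ∘ τ ∘ (id ⊗ ι_i)⁻¹`. -/
def gammaAct (ζ : k) (hζ0 : ζ ≠ 0) (i : ℤ)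
    (τ : (LaurentPolynomial k ⊗[k] g) ≃ₗ[k] (LaurentPolynomial k ⊗[k] g)) :
    (LaurentPolynomial k ⊗[k] g) ≃ₗ[k] (LaurentPolynomial k ⊗[k] g) :=
  ((idTensorIota (g := g) ζ hζ0 i).symm.trans τ).trans (idTensorIota ζ hζ0 i)

/-- A family `u_ī`, `ī ∈ Γ = ℤ/mℤ` (presented as a function on integer representatives),
is a 1-cocycle on `Γ` in `Aut_S(g(S))` if each `u_i` is an `S`-algebra automorphism,
`u_i` depends only on `i` mod `m`, and `u_{i+j} = u_i ∘ ⁱ(u_j)`. -/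
def IsCocycle (m : ℕ) (ζ : k) (hζ0 : ζ ≠ 0)
    (u : ℤ → ((LaurentPolynomial k ⊗[k] g) ≃ₗ[k] (LaurentPolynomial k ⊗[k] g))) : Prop :=
  (∀ i : ℤ, IsSAut (u i)) ∧ (∀ i j : ℤ, (i : ZMod m) = (j : ZMod m) → u i = u j) ∧
    ∀ i j : ℤ, u (i + j) = (gammaAct ζ hζ0 i (u j)).trans (u i)

/-- The fixed point set `g(S)_u = {x : (u_ī ∘ (id ⊗ ι_i)) x = x for all ī}` of a 1-cocycle. -/
def cocycleFixed (ζ : k) (hζ0 : ζ ≠ 0)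
    (u : ℤ → ((LaurentPolynomial k ⊗[k] g) ≃ₗ[k] (LaurentPolynomial k ⊗[k] g))) :
    Set (LaurentPolynomial k ⊗[k] g) :=
  {x | ∀ i : ℤ, u i (idTensorIota ζ hζ0 i x) = x}

/-! Write `c := ζ` as a unit of `k`. A map that is `ι_i`-semilinear and fixes `F` pointwise sends
`zⁿ • y` with `y ∈ F` to `c^{in} • zⁿ • y`. Since these elements with `0 ≤ n < m` span `g(S)`, this
pins down `w_i`, and shows that `w_{i+j} = w_i ∘ w_j` and that `w_i` only depends on `c^i`, i.e. on
`i mod m`. Together with `ι_{i+j} = ι_i ∘ ι_j` this is the cocycle identity for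
`u_i = w_i ∘ ι_i⁻¹`, and `g(S)_u` is the common fixed set of the `w_i`. If `x = Σ zⁿ • yₙ` is fixed
by `w_1`, then `Σ zⁿ • (ζⁿ • yₙ)` is another representation of `x`, so `ζⁿ • yₙ = yₙ` by
uniqueness, hence `yₙ = 0` for `0 < n < m` and `x = y₀ ∈ F`. -/

theorem zpow_eq_zpow_of_intCast_eq {G : Type*} [Group G] {c : G} {m : ℕ} (hc : c ^ m = 1)
    {i j : ℤ} (hij : (i : ZMod m) = j) : c ^ i = c ^ j := by
  rw [zpow_eq_zpow_emod' i hc, zpow_eq_zpow_emod' j hc, (ZMod.intCast_eq_intCast_iff' i j m).mp hij]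

section TPowSpanning

variable {M : Type*} [AddCommGroup M] [Module k[T;T⁻¹] M]

variable (k) in
def TPowSpanning (m : ℕ) (F : Set M) : Prop :=
  ∀ x, ∃ y : Fin m → M, (∀ i, y i ∈ F) ∧ x = ∑ i : Fin m, (T (i : ℤ) : k[T;T⁻¹]) • y i

theorem TPowSpanning.ext {m : ℕ} {F : Set M} (hspan : TPowSpanning k m F)
    {N : Type*} [AddCommMonoid N] {E : Type*} [FunLike E M N] [AddMonoidHomClass E M N]
    {f f' : E} (h : ∀ n : ℤ, ∀ y ∈ F, f ((T n : k[T;T⁻¹]) • y) = f' ((T n : k[T;T⁻¹]) • y)) :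
    f = f' := by
  refine DFunLike.ext _ _ fun x => ?_
  obtain ⟨y, hyF, rfl⟩ := hspan x
  simp only [map_sum, h _ _ (hyF _)]

variable [Module k M] [IsScalarTower k k[T;T⁻¹] M]

theorem apply_T_smul_eq_of_fixes {c : kˣ} {f : M → M}
    (hsemi : ∀ s x, f (s • x) = scaleVar c s • f x) {F : Set M} (hfix : ∀ x ∈ F, f x = x)
    (n : ℤ) {y : M} (hy : y ∈ F) :
    f ((T n : k[T;T⁻¹]) • y) = ((c ^ n : kˣ) : k) • (T n : k[T;T⁻¹]) • y := by
  rw [hsemi, hfix y hy, scaleVar_T, smul_assoc]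

theorem mem_of_apply_eq_self {m : ℕ} [NeZero m] {ζ : k} (hζ : IsPrimitiveRoot ζ m) {hζ0 : ζ ≠ 0}
    {F : Submodule k M}
    (hrep : ∀ x, ∃! y : Fin m → M, (∀ i, y i ∈ F) ∧ x = ∑ i : Fin m, (T (i : ℤ) : k[T;T⁻¹]) • y i)
    {f : M →ₗ[k] M} (hsemi : ∀ s x, f (s • x) = scaleVar (Units.mk0 ζ hζ0) s • f x)
    (hfix : ∀ x ∈ F, f x = x) {x : M} (hx : f x = x) : x ∈ F := by
  obtain ⟨y, ⟨hyF, rfl⟩, hy_unique⟩ := hrep x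
  have hscaled : (fun n : Fin m => ζ ^ (n : ℕ) • y n) = y := by
    refine hy_unique _ ⟨fun n => F.smul_mem _ (hyF n), ?_⟩
    conv_lhs => rw [← hx]
    rw [map_sum]
    refine Finset.sum_congr rfl fun n _ => ?_
    rw [apply_T_smul_eq_of_fixes hsemi hfix _ (hyF n), smul_comm, Units.val_zpow_eq_zpow_val,
      Units.val_mk0, zpow_natCast]
  have hy_zero : ∀ n : Fin m, n ≠ 0 → y n = 0 := fun n hn => by
    have hpow : ζ ^ (n : ℕ) ≠ 1 := hζ.pow_ne_one_of_pos_of_lt (Fin.val_ne_zero_iff.mpr hn) n.isLt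
    have : (ζ ^ (n : ℕ) - 1) • y n = 0 := by rw [sub_smul, congrFun hscaled n, one_smul, sub_self]
    exact (smul_eq_zero.mp this).resolve_left (sub_ne_zero.mpr hpow)
  rw [Finset.sum_eq_single_of_mem 0 (Finset.mem_univ _) fun n _ hn => by
    rw [hy_zero n hn, smul_zero]]
  simpa using hyF 0

variable {m : ℕ} {c : kˣ} {F : Set M} {w : ℤ → M ≃ₗ[k] M}

theorem TPowSpanning.eq_of_zpow_eq (hspan : TPowSpanning k m F)
    (hsemi : ∀ i s x, w i (s • x) = scaleVar (c ^ i) s • w i x)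
    (hfix : ∀ i, ∀ x ∈ F, w i x = x) {i j : ℤ} (hij : c ^ i = c ^ j) : w i = w j :=
  hspan.ext fun n y hy => by
    rw [apply_T_smul_eq_of_fixes (hsemi i) (hfix i) n hy,
      apply_T_smul_eq_of_fixes (hsemi j) (hfix j) n hy, hij]

theorem TPowSpanning.add_eq_trans (hspan : TPowSpanning k m F)
    (hsemi : ∀ i s x, w i (s • x) = scaleVar (c ^ i) s • w i x)
    (hfix : ∀ i, ∀ x ∈ F, w i x = x) (i j : ℤ) : w (i + j) = (w j).trans (w i) :=
  hspan.ext fun n y hy => by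
    have key := fun l => apply_T_smul_eq_of_fixes (f := w l) (hsemi l) (hfix l) n hy
    rw [LinearEquiv.trans_apply, key, key, map_smul, key, zpow_add, mul_zpow, Units.val_mul,
      mul_smul, smul_comm]

end TPowSpanning

section IdTensorIota

variable {ζ : k} {hζ0 : ζ ≠ 0}

theorem idTensorIota_smul (i : ℤ) (s : k[T;T⁻¹]) (x : k[T;T⁻¹] ⊗[k] g) :
    idTensorIota ζ hζ0 i (s • x) = scaleVar (Units.mk0 ζ hζ0 ^ i) s • idTensorIota ζ hζ0 i x := by
  induction x using TensorProduct.induction_on with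
  | zero => simp
  | tmul p y => simp [idTensorIota, TensorProduct.smul_tmul', scaleVarEquiv_apply]
  | add a b ha hb => simp only [smul_add, map_add, ha, hb]

theorem idTensorIota_lie (i : ℤ) (x y : k[T;T⁻¹] ⊗[k] g) :
    idTensorIota ζ hζ0 i ⁅x, y⁆ = ⁅idTensorIota ζ hζ0 i x, idTensorIota ζ hζ0 i y⁆ :=
  (LieAlgebra.ExtendScalars.map (scaleVar (Units.mk0 ζ hζ0 ^ i)) (LieHom.id : g →ₗ⁅k⁆ g)).map_lie x y

theorem idTensorIota_symm_smul (i : ℤ) (s : k[T;T⁻¹]) (x : k[T;T⁻¹] ⊗[k] g) :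
    (idTensorIota ζ hζ0 i).symm (s • x) =
      (scaleVarEquiv (Units.mk0 ζ hζ0 ^ i)).symm s • (idTensorIota ζ hζ0 i).symm x := by
  rw [LinearEquiv.symm_apply_eq, idTensorIota_smul, ← scaleVarEquiv_apply,
    AlgEquiv.apply_symm_apply, LinearEquiv.apply_symm_apply]

theorem idTensorIota_symm_lie (i : ℤ) (x y : k[T;T⁻¹] ⊗[k] g) :
    (idTensorIota ζ hζ0 i).symm ⁅x, y⁆ =
      ⁅(idTensorIota ζ hζ0 i).symm x, (idTensorIota ζ hζ0 i).symm y⁆ := by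
  rw [LinearEquiv.symm_apply_eq, idTensorIota_lie, LinearEquiv.apply_symm_apply,
    LinearEquiv.apply_symm_apply]

theorem idTensorIota_add (i j : ℤ) :
    idTensorIota (g := g) ζ hζ0 (i + j) = (idTensorIota ζ hζ0 j).trans (idTensorIota ζ hζ0 i) := by
  refine LinearEquiv.ext fun x => ?_
  induction x using TensorProduct.induction_on with
  | zero => simp
  | tmul p a =>
    simp only [idTensorIota, LinearEquiv.trans_apply, TensorProduct.congr_tmul,
      LinearEquiv.refl_apply, AlgEquiv.toLinearEquiv_apply, scaleVarEquiv_apply, zpow_add,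
      ← scaleVar_comp, AlgHom.comp_apply]
  | add a b ha hb => rw [map_add, ha, hb, map_add]

theorem idTensorIota_eq_of_zpow_eq {i j : ℤ} (hij : Units.mk0 ζ hζ0 ^ i = Units.mk0 ζ hζ0 ^ j) :
    idTensorIota (g := g) ζ hζ0 i = idTensorIota ζ hζ0 j := by
  rw [idTensorIota, idTensorIota, hij]

end IdTensorIota

section Cocycle

variable {m : ℕ} {ζ : k} {hζ0 : ζ ≠ 0} {w : ℤ → (k[T;T⁻¹] ⊗[k] g) ≃ₗ[k] (k[T;T⁻¹] ⊗[k] g)}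

def semilinearCocycle (ζ : k) (hζ0 : ζ ≠ 0) (w : ℤ → (k[T;T⁻¹] ⊗[k] g) ≃ₗ[k] (k[T;T⁻¹] ⊗[k] g))
    (i : ℤ) : (k[T;T⁻¹] ⊗[k] g) ≃ₗ[k] (k[T;T⁻¹] ⊗[k] g) :=
  (idTensorIota ζ hζ0 i).symm.trans (w i)

theorem isSAut_semilinearCocycle {i : ℤ}
    (hsemi : ∀ s x, w i (s • x) = scaleVarEquiv (Units.mk0 ζ hζ0 ^ i) s • w i x)
    (hlie : ∀ x y, w i ⁅x, y⁆ = ⁅w i x, w i y⁆) : IsSAut (semilinearCocycle ζ hζ0 w i) := by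
  refine ⟨fun s x => ?_, fun x y => ?_⟩
  · rw [semilinearCocycle, LinearEquiv.trans_apply, idTensorIota_symm_smul, hsemi,
      AlgEquiv.apply_symm_apply, LinearEquiv.trans_apply]
  · rw [semilinearCocycle, LinearEquiv.trans_apply, idTensorIota_symm_lie, hlie,
      LinearEquiv.trans_apply, LinearEquiv.trans_apply]

theorem isCocycle_semilinearCocycle (hζm : ζ ^ m = 1) {F : Set (k[T;T⁻¹] ⊗[k] g)}
    (hspan : TPowSpanning k m F)
    (hsemi : ∀ i s x, w i (s • x) = scaleVarEquiv (Units.mk0 ζ hζ0 ^ i) s • w i x)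
    (hlie : ∀ i x y, w i ⁅x, y⁆ = ⁅w i x, w i y⁆) (hfix : ∀ i, ∀ x ∈ F, w i x = x) :
    IsCocycle m ζ hζ0 (semilinearCocycle ζ hζ0 w) := by
  refine ⟨fun i => isSAut_semilinearCocycle (hsemi i) (hlie i), fun i j hij => ?_, fun i j => ?_⟩
  · have hpow : Units.mk0 ζ hζ0 ^ i = Units.mk0 ζ hζ0 ^ j :=
      zpow_eq_zpow_of_intCast_eq (Units.ext (by simpa using hζm)) hij
    rw [semilinearCocycle, semilinearCocycle, idTensorIota_eq_of_zpow_eq hpow,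
      hspan.eq_of_zpow_eq hsemi hfix hpow]
  · refine LinearEquiv.ext fun x => ?_
    simp only [semilinearCocycle, gammaAct, LinearEquiv.trans_apply, LinearEquiv.symm_apply_apply,
      idTensorIota_add, LinearEquiv.symm_trans_apply, hspan.add_eq_trans hsemi hfix]

theorem cocycleFixed_semilinearCocycle :
    cocycleFixed ζ hζ0 (semilinearCocycle ζ hζ0 w) = {x | ∀ i, w i x = x} := by
  simp only [cocycleFixed, semilinearCocycle, LinearEquiv.trans_apply, LinearEquiv.symm_apply_apply]

end Cocycle

theorem statement9_general {k : Type*} [Field k] {g : Type*} [LieRing g] [LieAlgebra k g]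
    (m : ℕ) (hm : 0 < m) (ζ : k) (hζ : IsPrimitiveRoot ζ m)
    (F : Submodule ↥(Rsub k m) (LaurentPolynomial k ⊗[k] g))
    (hrep : ∀ x : LaurentPolynomial k ⊗[k] g,
      ∃! y : Fin m → LaurentPolynomial k ⊗[k] g,
        (∀ i, (y i : LaurentPolynomial k ⊗[k] g) ∈ F) ∧
          x = ∑ i : Fin m, ((T (i : ℤ) : LaurentPolynomial k) • y i))
    (w : ℤ → ((LaurentPolynomial k ⊗[k] g) ≃ₗ[k] (LaurentPolynomial k ⊗[k] g)))
    (hsemi : ∀ (i : ℤ) (s : LaurentPolynomial k) (x : LaurentPolynomial k ⊗[k] g),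
      w i (s • x) = (scaleVarEquiv (Units.mk0 ζ (hζ.ne_zero hm.ne') ^ i) s) • w i x)
    (hbracket : ∀ (i : ℤ) (x y : LaurentPolynomial k ⊗[k] g),
      w i ⁅x, y⁆ = ⁅w i x, w i y⁆)
    (hfix : ∀ (i : ℤ), ∀ x ∈ F, w i x = x) :
    IsCocycle m ζ (hζ.ne_zero hm.ne')
      (fun i : ℤ => (idTensorIota ζ (hζ.ne_zero hm.ne') i).symm.trans (w i)) ∧
    cocycleFixed ζ (hζ.ne_zero hm.ne')
      (fun i : ℤ => (idTensorIota ζ (hζ.ne_zero hm.ne') i).symm.trans (w i))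
      = (F : Set (LaurentPolynomial k ⊗[k] g)) := by
  have : NeZero m := ⟨hm.ne'⟩
  refine ⟨isCocycle_semilinearCocycle hζ.pow_eq_one (fun x => (hrep x).exists) hsemi hbracket hfix, ?_⟩
  change cocycleFixed ζ _ (semilinearCocycle ζ _ w) = _
  rw [cocycleFixed_semilinearCocycle]
  ext x
  refine ⟨fun hx => ?_, fun hx i => hfix i x hx⟩
  have hsemi_one : ∀ s x, w 1 (s • x) = scaleVar (Units.mk0 ζ (hζ.ne_zero hm.ne')) s • w 1 x :=
    fun s x => by rw [hsemi, zpow_one, scaleVarEquiv_apply]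
  exact mem_of_apply_eq_self hζ (F := F.restrictScalars k) hrep hsemi_one (hfix 1) (hx 1)

/-- If `F` is an `R`-subalgebra of `g(S)` with the unique
representation property, and for each `i` the map `w_i` is an (`R`-linear)
`ι_i`-semilinear automorphism of `g(S)` fixing `F` pointwise, then
`u_ī := w_ī ∘ (id ⊗ ι_i)⁻¹` is a 1-cocycle on `Γ` in `Aut_S(g(S))` with
`g(S)_u = F`. -/
theorem statement9 {k : Type*} [Field k] [CharZero k] {g : Type*} [LieRing g] [LieAlgebra k g]
    (m : ℕ) (hm : 0 < m) (ζ : k) (hζ : IsPrimitiveRoot ζ m)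
    (F : Submodule ↥(Rsub k m) (LaurentPolynomial k ⊗[k] g))
    (hlie : ∀ x ∈ F, ∀ y ∈ F, ⁅x, y⁆ ∈ F)
    (hrep : ∀ x : LaurentPolynomial k ⊗[k] g,
      ∃! y : Fin m → LaurentPolynomial k ⊗[k] g,
        (∀ i, (y i : LaurentPolynomial k ⊗[k] g) ∈ F) ∧
          x = ∑ i : Fin m, ((T (i : ℤ) : LaurentPolynomial k) • y i))
    (w : ℤ → ((LaurentPolynomial k ⊗[k] g) ≃ₗ[k] (LaurentPolynomial k ⊗[k] g)))
    (hsemi : ∀ (i : ℤ) (s : LaurentPolynomial k) (x : LaurentPolynomial k ⊗[k] g),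
      w i (s • x) = (scaleVarEquiv (Units.mk0 ζ (hζ.ne_zero hm.ne') ^ i) s) • w i x)
    (hbracket : ∀ (i : ℤ) (x y : LaurentPolynomial k ⊗[k] g),
      w i ⁅x, y⁆ = ⁅w i x, w i y⁆)
    (hfix : ∀ (i : ℤ), ∀ x ∈ F, w i x = x) :
    IsCocycle m ζ (hζ.ne_zero hm.ne')
      (fun i : ℤ => (idTensorIota ζ (hζ.ne_zero hm.ne') i).symm.trans (w i)) ∧
    cocycleFixed ζ (hζ.ne_zero hm.ne')
      (fun i : ℤ => (idTensorIota ζ (hζ.ne_zero hm.ne') i).symm.trans (w i))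
      = (F : Set (LaurentPolynomial k ⊗[k] g)) :=
  statement9_general m hm ζ hζ F hrep w hsemi hbracket hfix

end LoopPaper
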